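/- arXiv:2007.03981 — 2 statements merged into one kernel-verified Lean document; each statement's English description precedes it below -/
import Mathlib

section
/- The function x ↦ 1/|x|² on ℝ⁴ is, as a tempered distribution, its own Fourier transform: for every Schwartz function g : ℝ⁴ → ℂ, ∫_{ℝ⁴} ĝ(x)/|x|² dx = ∫_{ℝ⁴} g(y)/|y|² dy. -/
/-!
For `x ≠ 0` we have `1 / ‖x‖² = π ∫₀^∞ e^{-π t ‖x‖²} dt`, so by Fubini `∫ f(x) / ‖x‖² dx` is `π`
times the integral over `t > 0` of the Gaussian pairings `∫ f(x) e^{-π t ‖x‖²} dx`. Fubini applies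
in dimension `d ≥ 3`, since such a pairing is bounded both by `‖f‖₁` and by `‖f‖_∞ t^{-d/2}`.
The Gaussian `e^{-π t ‖x‖²}` has Fourier transform `t^{-d/2} e^{-π ‖ξ‖² / t}`, so the pairing of
`𝓕 g` at `t` is `t^{-d/2}` times the pairing of `g` at `1 / t`; in dimension four, `t⁻² dt` is
exactly the measure that the substitution `t ↦ 1 / t` turns into `dt`.
-/

open MeasureTheory Real RealInnerProductSpace Complex FourierTransform Set Module

lemma inv_sq_eq_pi_mul_integral_cexp {r : ℝ} (hr : r ≠ 0) :
    ((r : ℂ) ^ 2)⁻¹ = π * ∫ t in Ioi (0 : ℝ), cexp (-(π * t : ℝ) * r ^ 2) := by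
  have hb : (-((π * r ^ 2 : ℝ) : ℂ)).re < 0 := by
    rw [neg_re, ofReal_re, neg_lt_zero]
    positivity
  have h := integral_exp_mul_complex_Ioi hb 0
  simp only [ofReal_zero, mul_zero, Complex.exp_zero] at h
  have hπ : (π : ℂ) ≠ 0 := ofReal_ne_zero.2 pi_ne_zero
  have hr' : (r : ℂ) ≠ 0 := ofReal_ne_zero.2 hr
  calc ((r : ℂ) ^ 2)⁻¹ = π * (-1 / -((π * r ^ 2 : ℝ) : ℂ)) := by push_cast; field_simp
    _ = _ := by
      rw [← h]
      congr 2 with t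
      push_cast
      ring_nf

lemma integrableOn_Ioi_zero_of_bounded_of_le_rpow {E : Type*} [NormedAddCommGroup E] {φ : ℝ → E}
    {A B s : ℝ} (hs : 1 < s) (hφ : AEStronglyMeasurable φ (volume.restrict (Ioi 0)))
    (hA : ∀ t > 0, ‖φ t‖ ≤ A) (hB : ∀ t > 0, ‖φ t‖ ≤ B * t ^ (-s)) :
    IntegrableOn φ (Ioi 0) := by
  rw [← Ioc_union_Ioi_eq_Ioi zero_le_one]
  refine IntegrableOn.union ?_ ?_
  · refine (integrableOn_const (C := A) (by simp)).mono' (hφ.mono_set Ioc_subset_Ioi_self) ?_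
    exact ae_restrict_of_forall_mem measurableSet_Ioc fun t ht => hA t ht.1
  · refine ((integrableOn_Ioi_rpow_of_lt (neg_lt_neg hs) zero_lt_one).const_mul B).mono'
      (hφ.mono_set (Ioi_subset_Ioi zero_le_one)) ?_
    exact ae_restrict_of_forall_mem measurableSet_Ioi fun t ht =>
      hB t (zero_lt_one.trans ht)

lemma integral_Ioi_inv_sq_smul_comp_inv {E : Type*} [NormedAddCommGroup E] [NormedSpace ℝ E]
    (φ : ℝ → E) : ∫ t in Ioi 0, (t ^ 2)⁻¹ • φ t⁻¹ = ∫ t in Ioi 0, φ t := by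
  rw [← integral_comp_rpow_Ioi φ (p := -1) (by norm_num)]
  refine setIntegral_congr_fun measurableSet_Ioi fun t ht => ?_
  rw [abs_neg, abs_one, one_mul, rpow_neg_one, show (-1 : ℝ) - 1 = -(2 : ℕ) by norm_num,
    rpow_neg (le_of_lt ht), rpow_natCast]

section GaussianPairing

variable {V : Type*} [NormedAddCommGroup V]

lemma norm_mul_cexp_neg_pi_mul_sq_norm (f : V → ℂ) (t : ℝ) (x : V) :
    ‖f x * cexp (-(π * t : ℝ) * ‖x‖ ^ 2)‖ = ‖f x‖ * rexp (-(π * t) * ‖x‖ ^ 2) := by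
  rw [norm_mul, norm_cexp_neg_mul_sq, ofReal_re]

variable [InnerProductSpace ℝ V] [FiniteDimensional ℝ V] [MeasurableSpace V] [BorelSpace V]

noncomputable def gaussianPairing (f : V → ℂ) (t : ℝ) : ℂ :=
  ∫ x, f x * cexp (-(π * t : ℝ) * ‖x‖ ^ 2)

lemma integral_rexp_neg_pi_mul_sq_norm {t : ℝ} (ht : 0 < t) :
    ∫ x : V, rexp (-(π * t) * ‖x‖ ^ 2) = t ^ (-(finrank ℝ V / 2 : ℝ)) := by
  rw [GaussianFourier.integral_rexp_neg_mul_sq_norm (by positivity), rpow_neg ht.le,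
    ← inv_rpow ht.le]
  congr 1
  field_simp

lemma integrable_rexp_neg_pi_mul_sq_norm {t : ℝ} (ht : 0 < t) :
    Integrable fun x : V => rexp (-(π * t) * ‖x‖ ^ 2) :=
  .of_integral_ne_zero <| by rw [integral_rexp_neg_pi_mul_sq_norm ht]; positivity

lemma integrable_mul_cexp_neg_pi_mul_sq_norm {f : V → ℂ} (hf : Integrable f) {t : ℝ}
    (ht : 0 ≤ t) : Integrable fun x => f x * cexp (-(π * t : ℝ) * ‖x‖ ^ 2) := by
  refine hf.mul_bdd (c := 1) (by fun_prop) (.of_forall fun x => ?_)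
  rw [norm_cexp_neg_mul_sq, ofReal_re, exp_le_one_iff, neg_mul, neg_nonpos]
  positivity

lemma integrable_uncurry_mul_cexp_neg_pi_mul_sq_norm (hV : 2 < finrank ℝ V) {f : V → ℂ}
    (hf : Integrable f) {C : ℝ} (hC : ∀ x, ‖f x‖ ≤ C) :
    Integrable (Function.uncurry fun (x : V) (t : ℝ) => f x * cexp (-(π * t : ℝ) * ‖x‖ ^ 2))
      (volume.prod (volume.restrict (Ioi 0))) := by
  have hF : AEStronglyMeasurable
      (Function.uncurry fun (x : V) (t : ℝ) => f x * cexp (-(π * t : ℝ) * ‖x‖ ^ 2))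
      (volume.prod (volume.restrict (Ioi 0))) :=
    hf.aestronglyMeasurable.comp_fst.mul (Continuous.aestronglyMeasurable (by fun_prop))
  rw [integrable_prod_iff' hF]
  refine ⟨ae_restrict_of_forall_mem measurableSet_Ioi fun t ht =>
    integrable_mul_cexp_neg_pi_mul_sq_norm hf (le_of_lt ht), ?_⟩
  refine integrableOn_Ioi_zero_of_bounded_of_le_rpow (A := ∫ x, ‖f x‖) (B := C)
    (s := finrank ℝ V / 2) ?_ hF.norm.prod_swap.integral_prod_right' (fun t ht => ?_)
    (fun t ht => ?_)
  · have : (2 : ℝ) < finrank ℝ V := by exact_mod_cast hV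
    linarith
  all_goals
    simp only [Function.uncurry_apply_pair, norm_mul_cexp_neg_pi_mul_sq_norm]
    rw [Real.norm_of_nonneg (by positivity)]
  · refine integral_mono_of_nonneg (.of_forall fun x => by positivity) hf.norm
      (.of_forall fun x => ?_)
    exact mul_le_of_le_one_right (norm_nonneg _) (exp_le_one_iff.2 (by
      rw [neg_mul, neg_nonpos]; positivity))
  · rw [← integral_rexp_neg_pi_mul_sq_norm ht, ← integral_const_mul]
    refine integral_mono_of_nonneg (.of_forall fun x => by positivity)
      ((integrable_rexp_neg_pi_mul_sq_norm ht).const_mul C) (.of_forall fun x => ?_)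
    exact mul_le_mul_of_nonneg_right (hC x) (exp_pos _).le

theorem integral_div_norm_sq_eq_pi_mul_integral_gaussianPairing (hV : 2 < finrank ℝ V)
    {f : V → ℂ} (hf : Integrable f) {C : ℝ} (hC : ∀ x, ‖f x‖ ≤ C) :
    ∫ x, f x / (‖x‖ : ℂ) ^ 2 = π * ∫ t in Ioi 0, gaussianPairing f t := by
  have : Nontrivial V := finrank_pos_iff (R := ℝ).1 (by omega)
  calc ∫ x, f x / (‖x‖ : ℂ) ^ 2
      = ∫ x, π * ∫ t in Ioi 0, f x * cexp (-(π * t : ℝ) * ‖x‖ ^ 2) := by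
        refine integral_congr_ae ?_
        filter_upwards [compl_mem_ae_iff.2 (measure_singleton (0 : V))] with x hx
        rw [div_eq_mul_inv, inv_sq_eq_pi_mul_integral_cexp (norm_ne_zero_iff.2 hx),
          mul_left_comm, ← integral_const_mul]
    _ = π * ∫ t in Ioi 0, gaussianPairing f t := by
      rw [integral_const_mul,
        integral_integral_swap (integrable_uncurry_mul_cexp_neg_pi_mul_sq_norm hV hf hC)]
      rfl

theorem gaussianPairing_fourier {g : V → ℂ} (hg : Integrable g) {t : ℝ} (ht : 0 < t) :
    gaussianPairing (𝓕 g) t = (t ^ (finrank ℝ V / 2 : ℝ))⁻¹ • gaussianPairing g t⁻¹ := by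
  have hb : 0 < ((π * t : ℝ) : ℂ).re := by rw [ofReal_re]; positivity
  have hgauss : Integrable fun v : V => cexp (-(π * t : ℝ) * ‖v‖ ^ 2) := by
    simpa using GaussianFourier.integrable_cexp_neg_mul_sq_norm_add hb 0 (0 : V)
  have hconst : (π / ((π * t : ℝ) : ℂ)) ^ (finrank ℝ V / 2 : ℂ)
      = (((t ^ (finrank ℝ V / 2 : ℝ))⁻¹ : ℝ) : ℂ) := by
    rw [← inv_rpow ht.le, ofReal_cpow (inv_nonneg.2 ht.le)]
    push_cast
    congr 1
    field_simp
  have hexp : ∀ x : V, -(π : ℂ) ^ 2 * ‖x‖ ^ 2 / ((π * t : ℝ) : ℂ)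
      = -(π * t⁻¹ : ℝ) * ‖x‖ ^ 2 := by
    intro x
    push_cast
    field_simp
  calc gaussianPairing (𝓕 g) t
      = ∫ x, 𝓕 g x • cexp (-(π * t : ℝ) * ‖x‖ ^ 2) := rfl
    _ = ∫ x, g x • 𝓕 (fun v : V => cexp (-(π * t : ℝ) * ‖v‖ ^ 2)) x := by
      have := VectorFourier.integral_fourierIntegral_smul_eq_flip (L := innerₗ V)
        continuous_fourierChar continuous_inner hg hgauss
      rwa [flip_innerₗ] at this
    _ = (t ^ (finrank ℝ V / 2 : ℝ))⁻¹ • gaussianPairing g t⁻¹ := by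
      simp_rw [fourier_gaussian_innerProductSpace hb, hconst, hexp, gaussianPairing,
        ← integral_smul]
      congr 1 with x
      rw [real_smul, smul_eq_mul]
      ring

theorem integral_fourier_div_norm_sq_of_finrank_eq_four (hV : finrank ℝ V = 4)
    (g : SchwartzMap V ℂ) :
    ∫ x, 𝓕 (g : V → ℂ) x / (‖x‖ : ℂ) ^ 2 = ∫ x, g x / (‖x‖ : ℂ) ^ 2 := by
  have hV2 : 2 < finrank ℝ V := by omega
  rw [← SchwartzMap.fourier_coe,
    integral_div_norm_sq_eq_pi_mul_integral_gaussianPairing hV2 (𝓕 g).integrable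
      ((𝓕 g).norm_le_seminorm ℝ),
    integral_div_norm_sq_eq_pi_mul_integral_gaussianPairing hV2 g.integrable
      (g.norm_le_seminorm ℝ),
    ← integral_Ioi_inv_sq_smul_comp_inv (gaussianPairing g)]
  congr 1
  refine setIntegral_congr_fun measurableSet_Ioi fun t ht => ?_
  rw [SchwartzMap.fourier_coe, gaussianPairing_fourier g.integrable ht, hV]
  norm_num

end GaussianPairing

/-- The Newton kernel `x ↦ 1/|x|²` on `ℝ⁴` is its own Fourier transform as a
tempered distribution: for every Schwartz `g`, `∫ ĝ(x)/|x|² dx = ∫ g(y)/|y|² dy`. -/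
theorem newton_kernel_self_dual_R4 :
    ∀ g : SchwartzMap (EuclideanSpace ℝ (Fin 4)) ℂ,
      (∫ x : EuclideanSpace ℝ (Fin 4),
          (∫ y : EuclideanSpace ℝ (Fin 4),
            g y * Complex.exp (-(2 * (π : ℂ) * Complex.I * (⟪x, y⟫ : ℂ)))) / (‖x‖ : ℂ) ^ 2) =
        ∫ y : EuclideanSpace ℝ (Fin 4), g y / (‖y‖ : ℂ) ^ 2 := by
  intro g
  have hfourier : ∀ x, ∫ y, g y * cexp (-(2 * π * I * ⟪x, y⟫)) = 𝓕 (g : _ → ℂ) x := by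
    intro x
    rw [fourier_eq']
    congr 1 with y
    rw [smul_eq_mul, mul_comm, real_inner_comm]
    push_cast
    ring_nf
  simp_rw [hfourier]
  exact integral_fourier_div_norm_sq_of_finrank_eq_four finrank_euclideanSpace_fin g
end

section
/- Let φ : ℝ → ℂ be a Schwartz function and define Φ : ℝ⁴ → ℂ by Φ(x) = ∫_ℝ e^{iπτ|x|²} φ(τ) dτ. Then Φ ∈ L¹(ℝ⁴), and its Fourier transform satisfies, for every y ∈ ℝ⁴ with y ≠ 0, Φ̂(y) = (1/(iπ|y|²)) ∫_ℝ φ'(τ) e^{−iπ|y|²/τ} dτ. -/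
/-!
Damp `Φ` by the Gaussian `exp (-π ε ‖x‖²)`. By Fubini and the Fourier transform of a complex
Gaussian on `ℝ⁴`, the damped transform at `y` is `∫ φ(τ) (ε - iτ)⁻² exp (-a/(ε - iτ)) dτ` with
`a = π‖y‖²`, and `(ε - iτ)⁻² exp (-a/(ε - iτ))` is `(-ia)⁻¹` times the `τ`-derivative of
`exp (-a/(ε - iτ))`, so an integration by parts moves the derivative onto `φ`. Both sides converge
as `ε → 0⁺` by dominated convergence, since `exp (-a/z)` has modulus at most one for `Re z ≥ 0`.
Integrability of `Φ` holds because `Φ(x) = φ̂(-‖x‖²/2)` is a Schwartz function of `x`.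
-/

open MeasureTheory Real RealInnerProductSpace Complex Filter Topology FourierTransform SchwartzMap

theorem ofReal_sub_I_mul_ne_zero {ε : ℝ} (hε : ε ≠ 0) (τ : ℝ) : (ε : ℂ) - I * τ ≠ 0 := by
  intro h
  simpa [hε] using congrArg re h

theorem norm_inv_ofReal_sub_I_mul_le {ε : ℝ} (hε : 0 < ε) (τ : ℝ) :
    ‖((ε : ℂ) - I * τ)⁻¹‖ ≤ ε⁻¹ := by
  rw [norm_inv]
  refine inv_anti₀ hε ?_
  simpa [abs_of_pos hε] using abs_re_le_norm ((ε : ℂ) - I * τ)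

theorem norm_cexp_neg_mul_inv_le_one {a : ℝ} (ha : 0 ≤ a) {z : ℂ} (hz : 0 ≤ z.re) :
    ‖cexp (-a * z⁻¹)‖ ≤ 1 := by
  rw [norm_exp, Real.exp_le_one_iff, ← ofReal_neg, re_ofReal_mul, inv_re]
  exact mul_nonpos_of_nonpos_of_nonneg (neg_nonpos.mpr ha) (div_nonneg hz (normSq_nonneg z))

theorem hasDerivAt_cexp_neg_mul_inv (a : ℝ) {ε : ℝ} (hε : ε ≠ 0) (τ : ℝ) :
    HasDerivAt (fun t : ℝ ↦ cexp (-a * ((ε : ℂ) - I * t)⁻¹))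
      (-(I * a) * ((ε : ℂ) - I * τ)⁻¹ ^ 2 * cexp (-a * ((ε : ℂ) - I * τ)⁻¹)) τ := by
  have hz : HasDerivAt (fun t : ℝ ↦ (ε : ℂ) - I * t) (-I) τ := by
    simpa using ((hasDerivAt_id τ).ofReal_comp.const_mul I).const_sub (ε : ℂ)
  convert ((hz.inv (ofReal_sub_I_mul_ne_zero hε τ)).const_mul (-(a : ℂ))).cexp using 1
    <;> simp only [Pi.inv_apply, neg_neg, div_eq_mul_inv, inv_pow]
  ring

theorem SchwartzMap.integrable_deriv (φ : 𝓢(ℝ, ℂ)) : Integrable (deriv φ) := by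
  rw [show deriv φ = derivCLM ℝ ℂ φ from funext fun τ ↦ (derivCLM_apply ℝ φ τ).symm]
  exact (derivCLM ℝ ℂ φ).integrable

theorem SchwartzMap.integral_mul_deriv_eq_neg_deriv_mul_of_bounded (φ : 𝓢(ℝ, ℂ))
    {v v' : ℝ → ℂ} {C C' : ℝ} (hv : ∀ τ, HasDerivAt v (v' τ) τ) (hvC : ∀ τ, ‖v τ‖ ≤ C)
    (hv'C : ∀ τ, ‖v' τ‖ ≤ C') :
    ∫ τ, φ τ * v' τ = -∫ τ, deriv φ τ * v τ := by
  have hv_meas : AEStronglyMeasurable v :=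
    (Differentiable.continuous fun τ ↦ (hv τ).differentiableAt).aestronglyMeasurable
  have hv'_meas : AEStronglyMeasurable v' := by
    rw [show v' = deriv v from funext fun τ ↦ (hv τ).deriv.symm]
    exact (measurable_deriv v).aestronglyMeasurable
  exact integral_mul_deriv_eq_deriv_mul_of_integrable
    (fun τ _ ↦ φ.differentiableAt.hasDerivAt) (fun τ _ ↦ hv τ)
    (φ.integrable.mul_bdd hv'_meas (ae_of_all _ hv'C))
    (φ.integrable_deriv.mul_bdd hv_meas (ae_of_all _ hvC))
    (φ.integrable.mul_bdd hv_meas (ae_of_all _ hvC))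

theorem integral_mul_inv_sq_mul_cexp_neg_mul_inv (φ : 𝓢(ℝ, ℂ)) {a ε : ℝ} (ha : 0 < a)
    (hε : 0 < ε) :
    ∫ τ : ℝ, φ τ * (((ε : ℂ) - I * τ)⁻¹ ^ 2 * cexp (-a * ((ε : ℂ) - I * τ)⁻¹)) =
      (I * a)⁻¹ * ∫ τ : ℝ, deriv φ τ * cexp (-a * ((ε : ℂ) - I * τ)⁻¹) := by
  have ha' : (a : ℂ) ≠ 0 := ofReal_ne_zero.mpr ha.ne'
  have hre : ∀ τ : ℝ, 0 ≤ ((ε : ℂ) - I * τ).re := fun τ ↦ by simpa using hε.le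
  have hibp := φ.integral_mul_deriv_eq_neg_deriv_mul_of_bounded
    (hasDerivAt_cexp_neg_mul_inv a hε.ne') (C := 1) (C' := a * ε⁻¹ ^ 2 * 1)
    (fun τ ↦ norm_cexp_neg_mul_inv_le_one ha.le (hre τ)) (fun τ ↦ by
      rw [norm_mul, norm_mul, norm_neg, norm_mul, norm_I, one_mul, norm_real,
        Real.norm_of_nonneg ha.le, norm_pow]
      gcongr
      · exact norm_inv_ofReal_sub_I_mul_le hε τ
      · exact norm_cexp_neg_mul_inv_le_one ha.le (hre τ))
  have hfactor : ∀ τ : ℝ, φ τ * (((ε : ℂ) - I * τ)⁻¹ ^ 2 * cexp (-a * ((ε : ℂ) - I * τ)⁻¹)) =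
      (-(I * a))⁻¹ * (φ τ * (-(I * a) * ((ε : ℂ) - I * τ)⁻¹ ^ 2 *
        cexp (-a * ((ε : ℂ) - I * τ)⁻¹))) := fun τ ↦ by
    field_simp
  simp_rw [hfactor]
  rw [integral_const_mul, hibp, inv_neg, neg_mul_neg]

theorem tendsto_integral_mul_cexp_neg_mul_inv {g : ℝ → ℂ} (hg : Integrable g) {a : ℝ}
    (ha : 0 ≤ a) :
    Tendsto (fun ε : ℝ ↦ ∫ τ : ℝ, g τ * cexp (-a * ((ε : ℂ) - I * τ)⁻¹)) (𝓝[>] 0)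
      (𝓝 (∫ τ : ℝ, g τ * cexp (-(I * a) / τ))) := by
  refine tendsto_integral_filter_of_dominated_convergence (fun τ ↦ ‖g τ‖) ?_ ?_ hg.norm ?_
  · exact Eventually.of_forall fun ε ↦
      hg.aestronglyMeasurable.mul (Measurable.aestronglyMeasurable (by fun_prop))
  · filter_upwards [self_mem_nhdsWithin] with ε (hε : 0 < ε)
    refine ae_of_all _ fun τ ↦ ?_
    rw [norm_mul]
    exact mul_le_of_le_one_right (norm_nonneg _)
      (norm_cexp_neg_mul_inv_le_one ha (by simpa using hε.le))
  · filter_upwards [compl_mem_ae_iff.mpr (measure_singleton (0 : ℝ))] with τ (hτ : τ ≠ 0)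
    have hz : ((0 : ℝ) : ℂ) - I * τ ≠ 0 := by simpa using hτ
    have hcont : ContinuousAt (fun ε : ℝ ↦ cexp (-a * ((ε : ℂ) - I * τ)⁻¹)) 0 := by
      fun_prop (disch := exact hz)
    have hval : -a * (((0 : ℝ) : ℂ) - I * τ)⁻¹ = -(I * a) / τ := by
      rw [ofReal_zero, zero_sub, inv_neg, mul_inv, inv_I]
      ring
    rw [← hval]
    exact (hcont.tendsto.mono_left nhdsWithin_le_nhds).const_mul (g τ)

theorem integral_cexp_mul_eq_fourier (f : ℝ → ℂ) (r : ℝ) :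
    ∫ τ : ℝ, cexp (I * π * τ * r) * f τ = 𝓕 f (-(1 / 2) * r) := by
  rw [Real.fourier_eq']
  congr 1 with τ
  rw [smul_eq_mul]
  congr 2
  simp only [inner, RCLike.re_to_real, star_trivial]
  push_cast
  ring

section InnerProductSpace

variable {V : Type*} [NormedAddCommGroup V] [InnerProductSpace ℝ V] [FiniteDimensional ℝ V]
  [MeasurableSpace V] [BorelSpace V]

theorem SchwartzMap.integrable_comp_mul_norm_sq {F : Type*} [NormedAddCommGroup F]
    [NormedSpace ℝ F] (ψ : 𝓢(ℝ, F)) {c : ℝ} (hc : c ≠ 0) :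
    Integrable (fun x : V ↦ ψ (c * ‖x‖ ^ 2)) := by
  have hg : (fun x : V ↦ c * ‖x‖ ^ 2).HasTemperateGrowth := by fun_prop
  have hg_upper : ∃ (k : ℕ) (C : ℝ), ∀ x : V, ‖x‖ ≤ C * (1 + ‖c * ‖x‖ ^ 2‖) ^ k := by
    refine ⟨1, 1 + |c|⁻¹, fun x ↦ ?_⟩
    have hc' : 0 < |c| := abs_pos.mpr hc
    rw [pow_one, norm_mul, norm_pow, norm_norm, Real.norm_eq_abs]
    have : ‖x‖ ≤ 1 + ‖x‖ ^ 2 := by nlinarith [sq_nonneg (‖x‖ - 1)]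
    have : (1 + |c|⁻¹) * (1 + |c| * ‖x‖ ^ 2) = 1 + |c| * ‖x‖ ^ 2 + |c|⁻¹ + ‖x‖ ^ 2 := by
      field_simp; ring
    nlinarith [inv_pos.mpr hc', mul_nonneg hc'.le (sq_nonneg ‖x‖)]
  exact (compCLM ℝ hg hg_upper ψ).integrable

theorem fourier_smul_const {E : Type*} [NormedAddCommGroup E] [NormedSpace ℂ E] [CompleteSpace E]
    (g : V → ℂ) (c : E) (y : V) : 𝓕 (fun x ↦ g x • c) y = 𝓕 g y • c := by
  simp only [Real.fourier_eq', smul_eq_mul, smul_smul, integral_smul_const]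

theorem fourier_integral_eq_integral_fourier {E : Type*} [NormedAddCommGroup E] [NormedSpace ℂ E]
    [CompleteSpace E] {α : Type*} [MeasurableSpace α] {μ : Measure α} [SFinite μ]
    {G : V → α → E} (hG : Integrable (Function.uncurry G) (volume.prod μ)) (y : V) :
    𝓕 (fun x ↦ ∫ τ, G x τ ∂μ) y = ∫ τ, 𝓕 (fun x ↦ G x τ) y ∂μ := by
  simp only [Real.fourier_eq', ← integral_smul]
  refine integral_integral_swap ?_
  have hchar : Continuous fun x : V ↦ cexp (↑(-2 * π * ⟪x, y⟫) * I) := by fun_prop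
  refine hG.bdd_smul 1 hchar.aestronglyMeasurable.comp_fst (ae_of_all _ fun p ↦ ?_)
  rw [norm_exp_ofReal_mul_I]

theorem fourier_cexp_neg_mul_sq_norm_mul_integral {φ : ℝ → ℂ} (hφ : Integrable φ) {ε : ℝ}
    (hε : 0 < ε) (y : V) :
    𝓕 (fun x : V ↦ cexp (-π * ε * ‖x‖ ^ 2) * ∫ τ : ℝ, cexp (I * π * τ * ‖x‖ ^ 2) * φ τ) y =
      ∫ τ : ℝ, φ τ * ((ε - I * τ)⁻¹ ^ (Module.finrank ℝ V / 2 : ℂ) *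
        cexp (-(π * ‖y‖ ^ 2) * (ε - I * τ)⁻¹)) := by
  have hre : ∀ τ : ℝ, (π * (ε - I * τ) : ℂ).re = π * ε := fun τ ↦ by simp
  have hpush : (fun x : V ↦
      cexp (-π * ε * ‖x‖ ^ 2) * ∫ τ : ℝ, cexp (I * π * τ * ‖x‖ ^ 2) * φ τ) =
      fun x ↦ ∫ τ : ℝ, cexp (-(π * (ε - I * τ)) * ‖x‖ ^ 2) • φ τ := by
    ext x
    rw [← integral_const_mul]
    congr 1 with τ
    rw [smul_eq_mul, ← mul_assoc, ← Complex.exp_add]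
    ring_nf
  have hint : Integrable (Function.uncurry fun (x : V) (τ : ℝ) ↦
      cexp (-(π * (ε - I * τ)) * ‖x‖ ^ 2) • φ τ) (volume.prod volume) := by
    have hgauss : Integrable (fun x : V ↦ cexp (-(π * ε) * ‖x‖ ^ 2)) := by
      simpa using GaussianFourier.integrable_cexp_neg_mul_sq_norm_add (V := V) (b := π * ε)
        (by simpa using by positivity) 0 0
    refine (hgauss.norm.mul_prod hφ.norm).mono' ?_ (ae_of_all _ fun p ↦ ?_)
    · have : Continuous fun p : V × ℝ ↦ cexp (-(π * (ε - I * p.2)) * ‖p.1‖ ^ 2) := by fun_prop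
      exact this.aestronglyMeasurable.smul hφ.aestronglyMeasurable.comp_snd
    · obtain ⟨x, τ⟩ := p
      simp only [Function.uncurry_apply_pair, norm_smul, norm_exp]
      refine le_of_eq (congrArg (· * _) (congrArg rexp ?_))
      simp [← ofReal_pow]
  rw [hpush, fourier_integral_eq_integral_fourier hint]
  congr 1 with τ
  have hz := ofReal_sub_I_mul_ne_zero hε.ne' τ
  rw [fourier_smul_const, fourier_gaussian_innerProductSpace (by rw [hre]; positivity),
    smul_eq_mul, mul_comm]
  congr 3 <;> field_simp

theorem tendsto_fourier_cexp_neg_mul_sq_norm_mul {f : V → ℂ} (hf : Integrable f) (y : V) :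
    Tendsto (fun ε : ℝ ↦ 𝓕 (fun x ↦ cexp (-π * ε * ‖x‖ ^ 2) * f x) y) (𝓝[>] 0)
      (𝓝 (𝓕 f y)) := by
  simp only [Real.fourier_eq']
  refine tendsto_integral_filter_of_dominated_convergence (fun x ↦ ‖f x‖) ?_ ?_ hf.norm ?_
  · have hchar : Continuous fun x : V ↦ cexp (↑(-2 * π * ⟪x, y⟫) * I) := by fun_prop
    refine Eventually.of_forall fun ε ↦ hchar.aestronglyMeasurable.smul
      (Continuous.aestronglyMeasurable ?_ |>.mul hf.aestronglyMeasurable)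
    fun_prop
  · filter_upwards [self_mem_nhdsWithin] with ε (hε : 0 < ε)
    refine ae_of_all _ fun x ↦ ?_
    rw [norm_smul, norm_exp_ofReal_mul_I, one_mul, norm_mul]
    refine mul_le_of_le_one_left (norm_nonneg _) ?_
    rw [norm_exp, Real.exp_le_one_iff, ← ofReal_pow, ← ofReal_neg, ← ofReal_mul, ← ofReal_mul,
      ofReal_re]
    have := mul_pos pi_pos hε
    nlinarith [sq_nonneg ‖x‖]
  · refine ae_of_all _ fun x ↦ ?_
    have : Continuous fun ε : ℝ ↦
        cexp (↑(-2 * π * ⟪x, y⟫) * I) • (cexp (-π * ε * ‖x‖ ^ 2) * f x) := by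
      fun_prop
    simpa using (this.tendsto 0).mono_left nhdsWithin_le_nhds

end InnerProductSpace

/-- For a Schwartz function `φ : ℝ → ℂ`, the function
`Φ(x) = ∫ e^{iπτ|x|²} φ(τ) dτ` on `ℝ⁴` is integrable, and its Fourier transform satisfies,
for `y ≠ 0`, `Φ̂(y) = (1/(iπ|y|²)) ∫ φ'(τ) e^{-iπ|y|²/τ} dτ`. -/
theorem fourier_transform_Phi
    (φ : SchwartzMap ℝ ℂ)
    (Φ : EuclideanSpace ℝ (Fin 4) → ℂ)
    (hΦ : ∀ x : EuclideanSpace ℝ (Fin 4),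
      Φ x = ∫ τ : ℝ, Complex.exp (Complex.I * (π : ℂ) * (τ : ℂ) * (‖x‖ : ℂ) ^ 2) * φ τ) :
    Integrable Φ volume ∧
    ∀ y : EuclideanSpace ℝ (Fin 4), y ≠ 0 →
      (∫ x : EuclideanSpace ℝ (Fin 4),
          Φ x * Complex.exp (-(2 * (π : ℂ) * Complex.I * (⟪x, y⟫ : ℂ)))) =
        (1 / (Complex.I * (π : ℂ) * (‖y‖ : ℂ) ^ 2)) *
          ∫ τ : ℝ, deriv (⇑φ) τ *
            Complex.exp (-(Complex.I * (π : ℂ) * (‖y‖ : ℂ) ^ 2) / (τ : ℂ)) := by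
  have hΦ_eq : ∀ x, Φ x = 𝓕 φ (-(1 / 2) * ‖x‖ ^ 2) := fun x ↦ by
    rw [hΦ, ← ofReal_pow, integral_cexp_mul_eq_fourier, fourier_coe]
  have hΦint : Integrable Φ :=
    ((𝓕 φ).integrable_comp_mul_norm_sq (c := -(1 / 2)) (by norm_num)).congr
      (ae_of_all _ fun x ↦ (hΦ_eq x).symm)
  refine ⟨hΦint, fun y hy ↦ ?_⟩
  have ha : 0 < π * ‖y‖ ^ 2 := by have := norm_pos_iff.mpr hy; positivity
  have hreg : ∀ ε : ℝ, 0 < ε → 𝓕 (fun x ↦ cexp (-π * ε * ‖x‖ ^ 2) * Φ x) y =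
      (I * ↑(π * ‖y‖ ^ 2))⁻¹ * ∫ τ : ℝ, deriv φ τ * cexp (-↑(π * ‖y‖ ^ 2) * (ε - I * τ)⁻¹) := by
    intro ε hε
    simp_rw [hΦ]
    rw [fourier_cexp_neg_mul_sq_norm_mul_integral φ.integrable hε, finrank_euclideanSpace_fin,
      show ((4 : ℕ) : ℂ) / 2 = (2 : ℕ) by norm_num]
    simp_rw [cpow_natCast]
    exact_mod_cast integral_mul_inv_sq_mul_cexp_neg_mul_inv φ ha hε
  have hlim := tendsto_nhds_unique (tendsto_fourier_cexp_neg_mul_sq_norm_mul hΦint y)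
    (((tendsto_integral_mul_cexp_neg_mul_inv φ.integrable_deriv ha.le).const_mul _).congr'
      (eventually_nhdsWithin_of_forall fun ε hε ↦ (hreg ε hε).symm))
  have hfourier : ∫ x, Φ x * cexp (-(2 * π * I * ⟪x, y⟫)) = 𝓕 Φ y := by
    rw [Real.fourier_eq']
    congr 1 with x
    rw [smul_eq_mul, mul_comm]
    push_cast
    ring_nf
  rw [hfourier, hlim]
  push_cast
  simp only [one_div, mul_assoc]
end
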